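/- Let n₆ be the Lie algebra structure on ℝ⁷ with nonzero brackets [e₁,e₂] = −√2 e₄, [e₁,e₃] = −√2 e₅, [e₁,e₄] = −e₆, [e₁,e₅] = −e₇. Let φ₆ = e^{123}+e^{347}+e^{356}+e^{145}−e^{246}+e^{167}+e^{257}, τ₆ = −√2 e^{34} + √2 e^{25} − e^{56} + e^{47}, λ = 9, and let D be the endomorphism with De₁ = −e₁, De₂ = −2e₂ + √2 e₆, De₃ = −2e₃ + √2 e₇, De₄ = −3e₄, De₅ = −3e₅, De₆ = −4e₆, De₇ = −4e₇. Then: (i) dφ₆ = 0; (ii) D is a derivation of n₆; (iii) dτ₆ = 4e^{123} − √2 e^{136} + √2 e^{127} + 2e^{145}; and (iv) λφ₆ + L_D φ₆ = 4e^{123} − √2 e^{136} + √2 e^{127} + 2e^{145}. Hence dτ₆ = λφ₆ + L_D φ₆, i.e. (n₆, φ₆) is an expanding semi-algebraic Laplacian soliton, since dτ₆ = Δ_{φ₆} φ₆. -/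

import Mathlib

noncomputable section

/-- `ℝ⁷` with its standard basis. -/
abbrev V7 := Fin 7 → ℝ

/-- `e^{i₁…i_k}`, the wedge of dual-basis covectors, in the determinant convention:
`(e^{i₁}∧…∧e^{i_k})(X₁,…,X_k) = det (Xₚ)_{i_q}`. -/
def wE {k : ℕ} (idx : Fin k → Fin 7) (X : Fin k → V7) : ℝ :=
  Matrix.det (Matrix.of fun p q : Fin k => X p (idx q))

/-- The index in `{0, …, k}` of the `m`-th element (0-based) of `{0, …, k} \ {i, j}`,
assuming `i < j`. -/
def skip2 (i j m : ℕ) : ℕ := if m < i then m else if m < j - 1 then m + 1 else m + 2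

/-- The Chevalley–Eilenberg differential of a `k`-form `ψ` with respect to a bracket `br`:
`dψ(X₁,…,X_{k+1}) = Σ_{i<j} (−1)^{i+j} ψ([Xᵢ,Xⱼ], X₁,…,X̂ᵢ,…,X̂ⱼ,…,X_{k+1})`. -/
def CEd {V : Type*} (br : V → V → V) {k : ℕ} (ψ : (Fin k → V) → ℝ)
    (X : Fin (k + 1) → V) : ℝ :=
  ∑ i : Fin (k + 1), ∑ j : Fin (k + 1),
    if (i : ℕ) < (j : ℕ) then
      (-1 : ℝ) ^ ((i : ℕ) + (j : ℕ)) *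
        ψ (fun l => if (l : ℕ) = 0 then br (X i) (X j)
          else X ⟨min (skip2 (i : ℕ) (j : ℕ) ((l : ℕ) - 1)) k,
            Nat.lt_succ_of_le (Nat.min_le_right _ _)⟩)
    else 0

/-- The algebraic Lie derivative of a `k`-form with respect to an endomorphism `D`:
`(L_D ψ)(X₁,…,X_k) = ψ(DX₁,X₂,…,X_k) + … + ψ(X₁,…,X_{k−1},DX_k)`. -/
def LD {V : Type*} (D : V → V) {k : ℕ} (ψ : (Fin k → V) → ℝ) (X : Fin k → V) : ℝ :=
  ∑ i : Fin k, ψ (Function.update X i (D (X i)))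

/-- The Lie bracket of `n₆`: `[e₁,e₂] = −√2 e₄`, `[e₁,e₃] = −√2 e₅`, `[e₁,e₄] = −e₆`,
`[e₁,e₅] = −e₇`. -/
def br6 (X Y : V7) : V7 :=
  ![0, 0, 0, -Real.sqrt 2 * (X 0 * Y 1 - X 1 * Y 0),
    -Real.sqrt 2 * (X 0 * Y 2 - X 2 * Y 0), -(X 0 * Y 3 - X 3 * Y 0),
    -(X 0 * Y 4 - X 4 * Y 0)]

/-- `φ₆ = e^{123}+e^{347}+e^{356}+e^{145}−e^{246}+e^{167}+e^{257}`. -/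
def phi6 : (Fin 3 → V7) → ℝ := fun X =>
  wE ![0, 1, 2] X + wE ![2, 3, 6] X + wE ![2, 4, 5] X + wE ![0, 3, 4] X
    - wE ![1, 3, 5] X + wE ![0, 5, 6] X + wE ![1, 4, 6] X

/-- `τ₆ = −√2 e^{34} + √2 e^{25} − e^{56} + e^{47}`. -/
def tau6 : (Fin 2 → V7) → ℝ := fun X =>
  -Real.sqrt 2 * wE ![2, 3] X + Real.sqrt 2 * wE ![1, 4] X - wE ![4, 5] X + wE ![3, 6] X

/-- `De₁ = −e₁`, `De₂ = −2e₂ + √2 e₆`, `De₃ = −2e₃ + √2 e₇`, `De₄ = −3e₄`, `De₅ = −3e₅`,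
`De₆ = −4e₆`, `De₇ = −4e₇`. -/
def D6 (X : V7) : V7 :=
  ![-X 0, -2 * X 1, -2 * X 2, -3 * X 3, -3 * X 4, Real.sqrt 2 * X 1 - 4 * X 5,
    Real.sqrt 2 * X 2 - 4 * X 6]

/-!
Every claim is a polynomial identity in the coordinates of the arguments: the differential of a
2- or 3-form is a signed sum of three or six terms, the Lie derivative of a 3-form a sum of three,
and each `e^{ijk}` a 3 × 3 determinant. In `dτ₆`, `√2 ^ 2 = 2` turns the products of the
`√2`-coefficients of `τ₆` with the `√2`-brackets `[e₁,e₂]`, `[e₁,e₃]` into the term `4e^{123}`.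
-/

lemma fun_if_val_eq_zero_two {α : Type*} (a : α) (g : Fin 2 → α) :
    (fun l : Fin 2 => if (l : ℕ) = 0 then a else g l) = ![a, g 1] := by
  funext l; fin_cases l <;> rfl

lemma fun_if_val_eq_zero_three {α : Type*} (a : α) (g : Fin 3 → α) :
    (fun l : Fin 3 => if (l : ℕ) = 0 then a else g l) = ![a, g 1, g 2] := by
  funext l; fin_cases l <;> rfl

section CEd

variable {V : Type*} (br : V → V → V)

lemma CEd_two (ψ : (Fin 2 → V) → ℝ) (X : Fin 3 → V) :
    CEd br ψ X = -ψ ![br (X 0) (X 1), X 2] + ψ ![br (X 0) (X 2), X 1]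
      - ψ ![br (X 1) (X 2), X 0] := by
  simp only [CEd, fun_if_val_eq_zero_two, Fin.sum_univ_succ, Fin.sum_univ_zero, Fin.val_zero,
    Fin.val_succ, Fin.succ_zero_eq_one, Fin.succ_one_eq_two]
  conv_lhs => norm_num [skip2]
  rfl

lemma CEd_three (ψ : (Fin 3 → V) → ℝ) (X : Fin 4 → V) :
    CEd br ψ X = -ψ ![br (X 0) (X 1), X 2, X 3] + ψ ![br (X 0) (X 2), X 1, X 3]
      - ψ ![br (X 0) (X 3), X 1, X 2] - ψ ![br (X 1) (X 2), X 0, X 3]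
      + ψ ![br (X 1) (X 3), X 0, X 2] - ψ ![br (X 2) (X 3), X 0, X 1] := by
  simp only [CEd, fun_if_val_eq_zero_three, Fin.sum_univ_succ, Fin.sum_univ_zero, Fin.val_zero,
    Fin.val_succ, Fin.succ_zero_eq_one, Fin.succ_one_eq_two]
  conv_lhs => norm_num [skip2]
  simp only [sub_eq_add_neg, add_assoc]
  rfl

end CEd

lemma LD_three {V : Type*} (D : V → V) (ψ : (Fin 3 → V) → ℝ) (X : Fin 3 → V) :
    LD D ψ X = ψ ![D (X 0), X 1, X 2] + ψ ![X 0, D (X 1), X 2] + ψ ![X 0, X 1, D (X 2)] := by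
  have h0 : Function.update X 0 (D (X 0)) = ![D (X 0), X 1, X 2] := by
    funext l; fin_cases l <;> rfl
  have h1 : Function.update X 1 (D (X 1)) = ![X 0, D (X 1), X 2] := by
    funext l; fin_cases l <;> rfl
  have h2 : Function.update X 2 (D (X 2)) = ![X 0, X 1, D (X 2)] := by
    funext l; fin_cases l <;> rfl
  rw [LD, Fin.sum_univ_three, h0, h1, h2]

lemma wE_two (a b : Fin 7) (X : Fin 2 → V7) :
    wE ![a, b] X = X 0 a * X 1 b - X 1 a * X 0 b := by
  simp [wE, Matrix.det_fin_two, mul_comm]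

lemma wE_three (a b c : Fin 7) (X : Fin 3 → V7) :
    wE ![a, b, c] X =
      X 0 a * X 1 b * X 2 c - X 0 a * X 1 c * X 2 b - X 0 b * X 1 a * X 2 c
        + X 0 b * X 1 c * X 2 a + X 0 c * X 1 a * X 2 b - X 0 c * X 1 b * X 2 a := by
  simp [wE, Matrix.det_fin_three]

lemma D6_leibniz (X Y : V7) : D6 (br6 X Y) = br6 (D6 X) Y + br6 X (D6 Y) := by
  funext i
  fin_cases i <;> simp [D6, br6] <;> ring

lemma CEd_br6_phi6_eq_zero : CEd br6 phi6 = fun _ => 0 := by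
  funext X
  simp only [CEd_three, phi6, wE_three, br6, Matrix.cons_val]
  ring

lemma CEd_br6_tau6_eq : CEd br6 tau6 = fun X =>
    4 * wE ![0, 1, 2] X - Real.sqrt 2 * wE ![0, 2, 5] X
      + Real.sqrt 2 * wE ![0, 1, 6] X + 2 * wE ![0, 3, 4] X := by
  funext X
  simp only [CEd_two, tau6, wE_two, wE_three, br6, Matrix.cons_val]
  ring_nf
  rw [Real.sq_sqrt zero_le_two]
  ring

lemma nine_mul_phi6_add_LD_D6_phi6_eq : (fun X => 9 * phi6 X + LD D6 phi6 X) = fun X =>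
    4 * wE ![0, 1, 2] X - Real.sqrt 2 * wE ![0, 2, 5] X
      + Real.sqrt 2 * wE ![0, 1, 6] X + 2 * wE ![0, 3, 4] X := by
  funext X
  simp only [LD_three, phi6, wE_three, D6, Matrix.cons_val]
  ring

/-- `(n₆, φ₆)` is an expanding semi-algebraic Laplacian soliton with `λ = 9`:
(i) `dφ₆ = 0`; (ii) `D` is a derivation;
(iii) `dτ₆ = 4e^{123} − √2 e^{136} + √2 e^{127} + 2e^{145}`;
(iv) `λφ₆ + L_D φ₆` equals the same 3-form; hence `dτ₆ = λφ₆ + L_D φ₆` with `λ > 0`. -/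
theorem n6_semialgebraic_soliton :
    (CEd br6 phi6 = fun _ => (0 : ℝ)) ∧
      (∀ X Y : V7, D6 (br6 X Y) = br6 (D6 X) Y + br6 X (D6 Y)) ∧
      (CEd br6 tau6 = fun X =>
        4 * wE ![0, 1, 2] X - Real.sqrt 2 * wE ![0, 2, 5] X
          + Real.sqrt 2 * wE ![0, 1, 6] X + 2 * wE ![0, 3, 4] X) ∧
      ((fun X => 9 * phi6 X + LD D6 phi6 X) = fun X =>
        4 * wE ![0, 1, 2] X - Real.sqrt 2 * wE ![0, 2, 5] X
          + Real.sqrt 2 * wE ![0, 1, 6] X + 2 * wE ![0, 3, 4] X) ∧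
      (CEd br6 tau6 = fun X => 9 * phi6 X + LD D6 phi6 X) ∧
      (0 : ℝ) < 9 := by
  refine ⟨CEd_br6_phi6_eq_zero, D6_leibniz, CEd_br6_tau6_eq, nine_mul_phi6_add_LD_D6_phi6_eq,
    CEd_br6_tau6_eq.trans nine_mul_phi6_add_LD_D6_phi6_eq.symm, by norm_num⟩
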